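/- arXiv:1806.05439 — 2 statements merged into one kernel-verified Lean document; each statement's English description precedes it below -/
import Mathlib

section
/- The seminorm N₁(g) = limsup_{R→∞} R^{-d} ∫_{I_R} |g(x)| dx, where I_R = {x ∈ ℝᵈ : max_i |x_i| ≤ R/2}, is a norm on the space of trigonometric polynomials on ℝᵈ (finite sums ∑_λ a_λ e^{2πi λ·x}); that is, if P is a trigonometric polynomial with N₁(P) = 0, then P ≡ 0. -/
open MeasureTheory Filter Topology Complex

/-! The mean `R⁻ᵈ ∫_{I_R} e_μ` of a character over the cube factors into one-dimensional means,
each of which is `1` when the frequency vanishes and `O(1/R)` otherwise. Hence the mean of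
`P · e_{-λ}` over `I_R` tends to the coefficient `a λ`, while its modulus is at most the mean of
`|P|`, whose limsup is zero. -/

section Characters

variable {E : Type*} [NormedAddCommGroup E] [InnerProductSpace ℝ E]

noncomputable def expInner (l x : E) : ℂ :=
  Complex.exp (2 * Real.pi * Complex.I * ((inner ℝ l x : ℝ) : ℂ))

lemma norm_expInner (l x : E) : ‖expInner l x‖ = 1 := by
  rw [expInner, Complex.norm_exp]
  simp

lemma expInner_add_left (l m x : E) : expInner (l + m) x = expInner l x * expInner m x := by
  rw [expInner, expInner, expInner, ← Complex.exp_add, inner_add_left]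
  push_cast
  ring_nf

lemma continuous_expInner (l : E) : Continuous (expInner l) := by
  unfold expInner
  fun_prop

end Characters

lemma norm_intervalIntegral_exp_mul_le {c : ℝ} (hc : c ≠ 0) (a b : ℝ) :
    ‖∫ t in a..b, Complex.exp (2 * Real.pi * Complex.I * ((c * t : ℝ) : ℂ))‖ ≤
      1 / (Real.pi * |c|) := by
  have hω : (2 * Real.pi * Complex.I * c : ℂ) ≠ 0 := by
    simp [Real.pi_ne_zero, hc]
  have hexp : ∀ t : ℝ, ‖Complex.exp (2 * Real.pi * Complex.I * c * t)‖ = 1 := fun t => by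
    rw [Complex.norm_exp]; simp
  simp_rw [Complex.ofReal_mul, ← mul_assoc]
  rw [integral_exp_mul_complex hω, norm_div]
  have hnum : ‖Complex.exp (2 * Real.pi * Complex.I * c * b) -
      Complex.exp (2 * Real.pi * Complex.I * c * a)‖ ≤ 2 :=
    (norm_sub_le _ _).trans (by rw [hexp, hexp]; norm_num)
  have hden : ‖(2 * Real.pi * Complex.I * c : ℂ)‖ = 2 * (Real.pi * |c|) := by
    simp [abs_of_pos Real.pi_pos]; ring
  calc _ ≤ 2 / (2 * (Real.pi * |c|)) := by rw [hden]; gcongr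
    _ = 1 / (Real.pi * |c|) := by rw [div_mul_eq_div_div, div_self two_ne_zero]

lemma tendsto_average_intervalIntegral_exp_mul (c : ℝ) :
    Tendsto (fun R : ℝ => (R : ℂ)⁻¹ *
        ∫ t in -(R / 2)..R / 2, Complex.exp (2 * Real.pi * Complex.I * ((c * t : ℝ) : ℂ)))
      atTop (𝓝 (if c = 0 then 1 else 0)) := by
  split_ifs with hc
  · refine tendsto_const_nhds.congr' ?_
    filter_upwards [eventually_gt_atTop 0] with R hR
    have hR' : (R : ℂ) ≠ 0 := by exact_mod_cast hR.ne'
    simp [hc, hR']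
  · rw [tendsto_zero_iff_norm_tendsto_zero]
    refine squeeze_zero' (g := fun R => 1 / (Real.pi * |c|) * R⁻¹)
      (Eventually.of_forall fun R => norm_nonneg _) ?_
      (by simpa using (tendsto_inv_atTop_zero (𝕜 := ℝ)).const_mul (1 / (Real.pi * |c|)))
    filter_upwards [eventually_gt_atTop 0] with R hR
    rw [norm_mul, norm_inv, Complex.norm_real, Real.norm_of_nonneg hR.le, mul_comm]
    exact mul_le_mul_of_nonneg_right (norm_intervalIntegral_exp_mul_le hc _ _) (by positivity)

section Cube

variable {d : ℕ}

def cube (d : ℕ) (R : ℝ) : Set (EuclideanSpace ℝ (Fin d)) := {x | ∀ i, |x i| ≤ R / 2}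

lemma cube_eq_preimage (R : ℝ) :
    cube d R = (MeasurableEquiv.toLp 2 (Fin d → ℝ)).symm ⁻¹'
      Set.univ.pi fun _ => Set.Icc (-(R / 2)) (R / 2) := by
  ext x
  simp only [cube, Set.mem_ofPred_eq, Set.mem_preimage, Set.mem_univ_pi, Set.mem_Icc, abs_le]
  rfl

lemma volume_cube (R : ℝ) : volume (cube d R) = ENNReal.ofReal R ^ d := by
  rw [cube_eq_preimage, (EuclideanSpace.volume_preserving_symm_measurableEquiv_toLp (Fin d))
    |>.measure_preimage (MeasurableSet.univ_pi fun _ => measurableSet_Icc).nullMeasurableSet,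
    volume_pi_pi]
  simp [Real.volume_Icc]

lemma expInner_eq_prod (l x : EuclideanSpace ℝ (Fin d)) :
    expInner l x = ∏ i, Complex.exp (2 * Real.pi * Complex.I * ((l i * x i : ℝ) : ℂ)) := by
  rw [expInner, ← Complex.exp_sum, ← Finset.mul_sum, PiLp.inner_apply]
  push_cast
  simp [mul_comm]

lemma integral_cube_expInner (l : EuclideanSpace ℝ (Fin d)) {R : ℝ} (hR : 0 ≤ R) :
    ∫ x in cube d R, expInner l x =
      ∏ i, ∫ t in -(R / 2)..R / 2, Complex.exp (2 * Real.pi * Complex.I * ((l i * t : ℝ) : ℂ)) := by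
  let e := MeasurableEquiv.toLp 2 (Fin d → ℝ)
  let g : (Fin d → ℝ) → ℂ := fun y =>
    ∏ i, Complex.exp (2 * Real.pi * Complex.I * ((l i * y i : ℝ) : ℂ))
  have hg : ∫ x in cube d R, expInner l x =
      ∫ x in e.symm ⁻¹' Set.univ.pi fun _ => Set.Icc (-(R / 2)) (R / 2), g (e.symm x) := by
    simp_rw [cube_eq_preimage, expInner_eq_prod]
    rfl
  rw [hg, (EuclideanSpace.volume_preserving_symm_measurableEquiv_toLp (Fin d))
    |>.setIntegral_preimage_emb e.symm.measurableEmbedding, volume_pi, Measure.restrict_pi_pi]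
  refine (integral_fintype_prod_eq_prod fun i (t : ℝ) =>
    Complex.exp (2 * Real.pi * Complex.I * ((l i * t : ℝ) : ℂ))).trans ?_
  refine Finset.prod_congr rfl fun i _ => ?_
  rw [integral_Icc_eq_integral_Ioc, intervalIntegral.integral_of_le (by linarith)]

end Cube

section CubeAverage

variable {d : ℕ} {F : Type*} [NormedAddCommGroup F] [NormedSpace ℝ F]

noncomputable def cubeAverage (f : EuclideanSpace ℝ (Fin d) → F) (R : ℝ) : F :=
  (R ^ d)⁻¹ • ∫ x in cube d R, f x

lemma norm_cubeAverage_le_cubeAverage_norm (f : EuclideanSpace ℝ (Fin d) → F) {R : ℝ}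
    (hR : 0 ≤ R) : ‖cubeAverage f R‖ ≤ cubeAverage (fun x => ‖f x‖) R := by
  rw [cubeAverage, cubeAverage, norm_smul, smul_eq_mul, norm_inv, norm_pow,
    Real.norm_of_nonneg hR]
  gcongr
  exact norm_integral_le_integral_norm _

lemma norm_cubeAverage_le {f : EuclideanSpace ℝ (Fin d) → F} {C : ℝ} (hf : ∀ x, ‖f x‖ ≤ C)
    {R : ℝ} (hR : 0 < R) : ‖cubeAverage f R‖ ≤ C := by
  have hint := norm_setIntegral_le_of_norm_le_const (s := cube d R)
    (by rw [volume_cube]; exact ENNReal.pow_lt_top ENNReal.ofReal_lt_top) fun x _ => hf x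
  rw [Measure.real, volume_cube, ENNReal.toReal_pow, ENNReal.toReal_ofReal hR.le] at hint
  rw [cubeAverage, norm_smul, norm_inv, norm_pow, Real.norm_of_nonneg hR.le]
  calc (R ^ d)⁻¹ * ‖∫ x in cube d R, f x‖ ≤ (R ^ d)⁻¹ * (C * R ^ d) := by gcongr
    _ = C := by field_simp

lemma cubeAverage_finsetSum {ι : Type*} (s : Finset ι) {f : ι → EuclideanSpace ℝ (Fin d) → F}
    {R : ℝ} (hf : ∀ i ∈ s, IntegrableOn (f i) (cube d R)) :
    cubeAverage (fun x => ∑ i ∈ s, f i x) R = ∑ i ∈ s, cubeAverage (f i) R := by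
  rw [cubeAverage, integral_finsetSum s hf, Finset.smul_sum]
  rfl

lemma cubeAverage_const_mul (c : ℂ) (f : EuclideanSpace ℝ (Fin d) → ℂ) (R : ℝ) :
    cubeAverage (fun x => c * f x) R = c * cubeAverage f R := by
  rw [cubeAverage, cubeAverage, integral_const_mul, mul_smul_comm]

lemma integrableOn_cube_expInner (l : EuclideanSpace ℝ (Fin d)) (R : ℝ) :
    IntegrableOn (expInner l) (cube d R) :=
  Measure.integrableOn_of_bounded (M := 1)
    (by rw [volume_cube]; exact ENNReal.pow_ne_top ENNReal.ofReal_ne_top)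
    (continuous_expInner l).aestronglyMeasurable
    (ae_of_all _ fun x => (norm_expInner l x).le)

lemma cubeAverage_expInner (l : EuclideanSpace ℝ (Fin d)) {R : ℝ} (hR : 0 ≤ R) :
    cubeAverage (expInner l) R = ∏ i, (R : ℂ)⁻¹ *
      ∫ t in -(R / 2)..R / 2, Complex.exp (2 * Real.pi * Complex.I * ((l i * t : ℝ) : ℂ)) := by
  rw [cubeAverage, integral_cube_expInner l hR, Complex.real_smul, Finset.prod_mul_distrib,
    Finset.prod_const, Finset.card_univ, Fintype.card_fin, inv_pow]
  push_cast
  rfl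

lemma tendsto_cubeAverage_expInner (l : EuclideanSpace ℝ (Fin d)) :
    Tendsto (cubeAverage (expInner l)) atTop (𝓝 (if l = 0 then 1 else 0)) := by
  have hprod := tendsto_finsetProd Finset.univ fun i _ =>
    tendsto_average_intervalIntegral_exp_mul (l i)
  rw [Finset.prod_boole] at hprod
  have hl : (∀ i ∈ Finset.univ, l i = 0) ↔ l = 0 :=
    ⟨fun h => PiLp.ext fun i => h i (Finset.mem_univ i), fun h i _ => by simp [h]⟩
  simp only [hl] at hprod
  refine hprod.congr' ?_
  filter_upwards [eventually_ge_atTop 0] with R hR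
  exact (cubeAverage_expInner l hR).symm

end CubeAverage

lemma tendsto_cubeAverage_mul_expInner_neg {d : ℕ} {Λ : Finset (EuclideanSpace ℝ (Fin d))}
    {a : EuclideanSpace ℝ (Fin d) → ℂ} {P : EuclideanSpace ℝ (Fin d) → ℂ}
    (hP : ∀ x, P x = ∑ l ∈ Λ, a l * expInner l x) {l₀ : EuclideanSpace ℝ (Fin d)}
    (hl₀ : l₀ ∈ Λ) :
    Tendsto (cubeAverage fun x => P x * expInner (-l₀) x) atTop (𝓝 (a l₀)) := by
  have hshift : (fun x => P x * expInner (-l₀) x) =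
      fun x => ∑ l ∈ Λ, a l * expInner (l - l₀) x := by
    funext x
    rw [hP, Finset.sum_mul]
    refine Finset.sum_congr rfl fun l _ => ?_
    rw [sub_eq_add_neg, expInner_add_left, mul_assoc]
  have havg : (cubeAverage fun x => P x * expInner (-l₀) x) =
      fun R => ∑ l ∈ Λ, a l * cubeAverage (expInner (l - l₀)) R := by
    funext R
    rw [hshift, cubeAverage_finsetSum Λ fun l _ =>
      (integrableOn_cube_expInner (l - l₀) R).const_mul (a l)]
    simp_rw [cubeAverage_const_mul]
  rw [havg]
  simpa [sub_eq_zero, hl₀] using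
    tendsto_finsetSum Λ fun l _ => (tendsto_cubeAverage_expInner (l - l₀)).const_mul (a l)

theorem stmt1 {d : ℕ} (Λ : Finset (EuclideanSpace ℝ (Fin d)))
    (a : EuclideanSpace ℝ (Fin d) → ℂ)
    (P : EuclideanSpace ℝ (Fin d) → ℂ)
    (hP : ∀ x, P x = ∑ l ∈ Λ, a l *
      Complex.exp (2 * Real.pi * Complex.I * ((inner ℝ l x : ℝ) : ℂ)))
    (hN : Filter.limsup
      (fun R : ℝ => (1 / R ^ d) *
        ∫ x in {x : EuclideanSpace ℝ (Fin d) | ∀ i, |x i| ≤ R / 2}, ‖P x‖)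
      atTop = 0) :
    ∀ x, P x = 0 := by
  change ∀ x, P x = ∑ l ∈ Λ, a l * expInner l x at hP
  simp_rw [one_div, ← smul_eq_mul] at hN
  change limsup (cubeAverage fun x => ‖P x‖) atTop = 0 at hN
  have hbdd : IsBoundedUnder (· ≤ ·) atTop (cubeAverage fun x => ‖P x‖) := by
    refine isBoundedUnder_of_eventually_le (a := ∑ l ∈ Λ, ‖a l‖) ?_
    filter_upwards [eventually_gt_atTop 0] with R hR
    refine (Real.le_norm_self _).trans (norm_cubeAverage_le (fun x => ?_) hR)
    rw [norm_norm, hP]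
    exact (norm_sum_le _ _).trans_eq (by simp [norm_expInner])
  have hcoef : ∀ l ∈ Λ, a l = 0 := by
    intro l₀ hl₀
    have hlim := (tendsto_cubeAverage_mul_expInner_neg hP hl₀).norm
    rw [← norm_le_zero_iff, ← hN, ← hlim.limsup_eq]
    refine limsup_le_limsup ?_ hlim.isCoboundedUnder_le hbdd
    filter_upwards [eventually_ge_atTop 0] with R hR
    refine (norm_cubeAverage_le_cubeAverage_norm _ hR).trans_eq ?_
    simp [norm_expInner]
  intro x
  rw [hP x]
  exact Finset.sum_eq_zero fun l hl => by rw [hcoef l hl, zero_mul]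
end

section
/- Let a : ℝ → ℝᵈ be continuous and A : ℝ → ℝ^{d×d} be continuous with A(ξ) symmetric nonnegative for all ξ, and let M > 0. Suppose that for every (τ,κ) ∈ ℝ^{d+1} with τ² + |κ|² = 1, the set {ξ ∈ ℝ : |ξ| ≤ M, τ + a(ξ)·κ = 0, κᵀA(ξ)κ = 0} has one-dimensional Lebesgue measure zero. Then for every δ > 0, ω_δ(ℓ) := sup_{|τ|+|κ| ≥ δ} ∫_{|ξ| ≤ M} ℓ / (ℓ + |τ + a(ξ)·κ|² + (κᵀA(ξ)κ)²) dξ tends to 0 as ℓ → 0⁺. -/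
/-!
Write `D(p, ξ) = |τ + a(ξ)·κ|² + (κᵀA(ξ)κ)²` for `p = (τ, κ)`. Non-degeneracy says that
`D(u, ·) > 0` a.e. on `[-M, M]` for every `u` on the unit sphere, so `∫ m / (m + D(u, ·)) → 0`
as `m → 0⁺` by dominated convergence. These integrals are continuous in `u` and monotone in `m`,
so by Dini's theorem the convergence is uniform on the compact sphere. Finally every `p` with
`|τ| + |κ| ≥ δ` is `r • u` with `r ≥ δ / 2`, and `D(r • u, ·) ≥ c D(u, ·)` for
`c = min ((δ/2)², (δ/2)⁴)`, so the integrand at `(ℓ, p)` is bounded by the one at `(ℓ / c, u)`.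
-/

open MeasureTheory Filter Topology Set

lemma div_add_le_div_add_of_le {m m' D : ℝ} (hm : 0 < m) (hmm' : m ≤ m') (hD : 0 ≤ D) :
    m / (m + D) ≤ m' / (m' + D) := by
  rw [div_le_div_iff₀ (by linarith) (by linarith)]
  nlinarith

lemma div_add_le_inv_mul_div_add_of_mul_le {ℓ c D D' : ℝ} (hℓ : 0 < ℓ) (hc : 0 < c)
    (hD' : 0 ≤ D') (h : c * D' ≤ D) : ℓ / (ℓ + D) ≤ c⁻¹ * ℓ / (c⁻¹ * ℓ + D') := by
  have hrhs : c⁻¹ * ℓ / (c⁻¹ * ℓ + D') = ℓ / (ℓ + c * D') := by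
    field_simp
  rw [hrhs]
  exact div_le_div_of_nonneg_left hℓ.le (by positivity) (by linarith)

lemma norm_div_add_le_one {m D : ℝ} (hm : 0 < m) (hD : 0 ≤ D) : ‖m / (m + D)‖ ≤ 1 := by
  rw [Real.norm_of_nonneg (by positivity)]
  exact div_le_one_of_le₀ (by linarith) (by positivity)

section Integral

variable {X : Type*} [MeasurableSpace X] {μ : Measure X}

lemma MeasureTheory.AEStronglyMeasurable.div_add {f : X → ℝ} (hf : AEStronglyMeasurable f μ)
    (m : ℝ) : AEStronglyMeasurable (fun x => m / (m + f x)) μ :=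
  aestronglyMeasurable_const.div₀ (aestronglyMeasurable_const.add hf)

lemma integral_div_add_nonneg {f : X → ℝ} (hf₀ : ∀ x, 0 ≤ f x) {m : ℝ} (hm : 0 ≤ m) :
    0 ≤ ∫ x, m / (m + f x) ∂μ :=
  integral_nonneg fun x => div_nonneg hm (add_nonneg hm (hf₀ x))

variable [IsFiniteMeasure μ]

lemma integrable_div_add {f : X → ℝ} (hf : AEStronglyMeasurable f μ) (hf₀ : ∀ x, 0 ≤ f x)
    {m : ℝ} (hm : 0 < m) : Integrable (fun x => m / (m + f x)) μ :=
  .of_bound (hf.div_add m) 1 (ae_of_all _ fun x => norm_div_add_le_one hm (hf₀ x))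

lemma integral_div_add_le_of_le {f : X → ℝ} (hf : AEStronglyMeasurable f μ) (hf₀ : ∀ x, 0 ≤ f x)
    {m m' : ℝ} (hm : 0 < m) (hmm' : m ≤ m') :
    ∫ x, m / (m + f x) ∂μ ≤ ∫ x, m' / (m' + f x) ∂μ :=
  integral_mono (integrable_div_add hf hf₀ hm) (integrable_div_add hf hf₀ (hm.trans_le hmm'))
    fun x => div_add_le_div_add_of_le hm hmm' (hf₀ x)

lemma integral_div_add_le_of_mul_le {f g : X → ℝ} (hf : AEStronglyMeasurable f μ)
    (hg : AEStronglyMeasurable g μ) (hf₀ : ∀ x, 0 ≤ f x) (hg₀ : ∀ x, 0 ≤ g x) {ℓ c : ℝ}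
    (hℓ : 0 < ℓ) (hc : 0 < c) (hgf : ∀ x, c * g x ≤ f x) :
    ∫ x, ℓ / (ℓ + f x) ∂μ ≤ ∫ x, c⁻¹ * ℓ / (c⁻¹ * ℓ + g x) ∂μ :=
  integral_mono (integrable_div_add hf hf₀ hℓ)
    (integrable_div_add hg hg₀ (mul_pos (inv_pos.2 hc) hℓ))
    fun x => div_add_le_inv_mul_div_add_of_mul_le hℓ hc (hg₀ x) (hgf x)

theorem tendsto_integral_div_add_nhdsGT_zero {f : X → ℝ} (hf : AEStronglyMeasurable f μ)
    (hpos : ∀ᵐ x ∂μ, 0 < f x) :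
    Tendsto (fun m : ℝ => ∫ x, m / (m + f x) ∂μ) (𝓝[>] 0) (𝓝 0) := by
  have hlim := tendsto_integral_filter_of_dominated_convergence (μ := μ) (l := 𝓝[>] (0 : ℝ))
    (F := fun m x => m / (m + f x)) (f := fun _ => 0) (fun _ => 1)
    (Eventually.of_forall hf.div_add) ?_ (integrable_const 1) ?_
  · simpa using hlim
  · filter_upwards [self_mem_nhdsWithin] with m (hm : 0 < m)
    filter_upwards [hpos] with x hx
    exact norm_div_add_le_one hm hx.le
  · filter_upwards [hpos] with x hx
    have hcont : ContinuousAt (fun m : ℝ => m / (m + f x)) 0 :=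
      continuousAt_id.div (continuousAt_id.add continuousAt_const) (by simpa using hx.ne')
    simpa using hcont.tendsto.mono_left nhdsWithin_le_nhds

variable {P : Type*} [TopologicalSpace P] [FirstCountableTopology P] {D : P → X → ℝ}

theorem continuous_integral_div_add (hmeas : ∀ p, AEStronglyMeasurable (D p) μ)
    (hcont : ∀ x, Continuous (D · x)) (hD₀ : ∀ p x, 0 ≤ D p x) {m : ℝ} (hm : 0 < m) :
    Continuous fun p => ∫ x, m / (m + D p x) ∂μ :=
  continuous_of_dominated (fun p => (hmeas p).div_add m)
    (fun p => ae_of_all _ fun x => norm_div_add_le_one hm (hD₀ p x)) (integrable_const 1)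
    (ae_of_all _ fun x => continuous_const.div (continuous_const.add (hcont x))
      fun p => (add_pos_of_pos_of_nonneg hm (hD₀ p x)).ne')

theorem tendstoUniformlyOn_integral_div_add {K : Set P} (hK : IsCompact K)
    (hmeas : ∀ p, AEStronglyMeasurable (D p) μ) (hcont : ∀ x, Continuous (D · x))
    (hD₀ : ∀ p x, 0 ≤ D p x) (hpos : ∀ p ∈ K, ∀ᵐ x ∂μ, 0 < D p x) :
    TendstoUniformlyOn (fun m p => ∫ x, m / (m + D p x) ∂μ) 0 (𝓝[>] 0) K := by
  set F : ℕ → P → ℝ := fun n p => ∫ x, 1 / (n + 1 : ℝ) / (1 / (n + 1 : ℝ) + D p x) ∂μ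
  have hseq : TendstoUniformlyOn F 0 atTop K := by
    refine Antitone.tendstoUniformlyOn_of_forall_tendsto hK
      (fun n => (continuous_integral_div_add hmeas hcont hD₀ n.one_div_pos_of_nat).continuousOn)
      (fun p _ n n' hnn' => integral_div_add_le_of_le (hmeas p) (hD₀ p) n'.one_div_pos_of_nat
        (Nat.one_div_le_one_div hnn')) continuousOn_const fun p hp => ?_
    refine (tendsto_integral_div_add_nhdsGT_zero (hmeas p) (hpos p hp)).comp ?_
    exact tendsto_nhdsWithin_of_tendsto_nhds_of_eventually_within _
      tendsto_one_div_add_atTop_nhds_zero_nat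
      (Eventually.of_forall fun n => mem_Ioi.2 n.one_div_pos_of_nat)
  rw [Metric.tendstoUniformlyOn_iff] at hseq ⊢
  intro ε hε
  obtain ⟨n, hn⟩ := (hseq ε hε).exists
  filter_upwards [Ioc_mem_nhdsGT n.one_div_pos_of_nat] with m ⟨hm, hmn⟩ p hp
  refine lt_of_le_of_lt ?_ (hn p hp)
  simp only [Pi.zero_apply, dist_zero_left, F,
    Real.norm_of_nonneg (integral_div_add_nonneg (hD₀ p) hm.le),
    Real.norm_of_nonneg (integral_div_add_nonneg (hD₀ p) n.one_div_pos_of_nat.le)]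
  exact integral_div_add_le_of_le (hmeas p) (hD₀ p) hm hmn

end Integral

section UnitSphere

variable {E : Type*} [NormedAddCommGroup E]

/-- The Euclidean unit sphere of `ℝ × E`; the norm of `ℝ × E` is the sup norm, so this is not
`Metric.sphere 0 1`. -/
def unitSphereProd (E : Type*) [Norm E] : Set (ℝ × E) := {p | p.1 ^ 2 + ‖p.2‖ ^ 2 = 1}

lemma isCompact_unitSphereProd [ProperSpace E] : IsCompact (unitSphereProd E) := by
  refine Metric.isCompact_of_isClosed_isBounded (isClosed_eq (by fun_prop) continuous_const)
    ((Metric.isBounded_closedBall (x := 0) (r := 1)).subset fun p (hp : _ = _) => ?_)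
  rw [Metric.mem_closedBall, dist_zero_right, Prod.norm_def, Real.norm_eq_abs]
  exact max_le (by nlinarith [sq_abs p.1, abs_nonneg p.1, sq_nonneg ‖p.2‖])
    (by nlinarith [norm_nonneg p.2, sq_nonneg p.1])

lemma exists_eq_smul_mem_unitSphereProd [NormedSpace ℝ E] {δ : ℝ} (hδ : 0 < δ) {p : ℝ × E}
    (hp : δ ≤ |p.1| + ‖p.2‖) : ∃ r, δ / 2 ≤ r ∧ ∃ u ∈ unitSphereProd E, p = r • u := by
  set r := √(p.1 ^ 2 + ‖p.2‖ ^ 2)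
  have hr_sq : r ^ 2 = p.1 ^ 2 + ‖p.2‖ ^ 2 := Real.sq_sqrt (by positivity)
  have hp₁ : |p.1| ≤ r := Real.abs_le_sqrt (by nlinarith [sq_nonneg ‖p.2‖])
  have hp₂ : ‖p.2‖ ≤ r := (Real.le_sqrt (norm_nonneg _) (by positivity)).2 (by nlinarith)
  have hr : 0 < r := by linarith
  refine ⟨r, by linarith, r⁻¹ • p, ?_, by rw [smul_smul, mul_inv_cancel₀ hr.ne', one_smul]⟩
  change (r⁻¹ * p.1) ^ 2 + ‖r⁻¹ • p.2‖ ^ 2 = 1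
  rw [norm_smul, Real.norm_of_nonneg (inv_nonneg.2 hr.le), mul_pow, mul_pow, ← mul_add, ← hr_sq]
  field_simp

end UnitSphere

section KineticSymbol

variable {d : ℕ} {a : ℝ → EuclideanSpace ℝ (Fin d)} {A : ℝ → Matrix (Fin d) (Fin d) ℝ}

noncomputable def kineticSymbol (a : ℝ → EuclideanSpace ℝ (Fin d))
    (A : ℝ → Matrix (Fin d) (Fin d) ℝ) (p : ℝ × EuclideanSpace ℝ (Fin d)) (ξ : ℝ) : ℝ :=
  |p.1 + ∑ i, a ξ i * p.2 i| ^ 2 + (∑ i, ∑ j, p.2 i * A ξ i j * p.2 j) ^ 2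

lemma kineticSymbol_nonneg (p : ℝ × EuclideanSpace ℝ (Fin d)) (ξ : ℝ) :
    0 ≤ kineticSymbol a A p ξ := by
  unfold kineticSymbol
  positivity

lemma continuous_kineticSymbol_left (ξ : ℝ) : Continuous (kineticSymbol a A · ξ) := by
  unfold kineticSymbol
  fun_prop

lemma continuous_kineticSymbol_right (ha : Continuous a) (hA : Continuous A)
    (p : ℝ × EuclideanSpace ℝ (Fin d)) : Continuous (kineticSymbol a A p) := by
  unfold kineticSymbol
  fun_prop

lemma kineticSymbol_smul (r : ℝ) (p : ℝ × EuclideanSpace ℝ (Fin d)) (ξ : ℝ) :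
    kineticSymbol a A (r • p) ξ =
      r ^ 2 * |p.1 + ∑ i, a ξ i * p.2 i| ^ 2 +
        r ^ 4 * (∑ i, ∑ j, p.2 i * A ξ i j * p.2 j) ^ 2 := by
  have htransport : r * p.1 + ∑ i, a ξ i * (r * p.2 i) = r * (p.1 + ∑ i, a ξ i * p.2 i) := by
    rw [mul_add, Finset.mul_sum]
    congr 1
    exact Finset.sum_congr rfl fun i _ => by ring
  have hdiffusion : ∑ i, ∑ j, r * p.2 i * A ξ i j * (r * p.2 j) =
      r ^ 2 * ∑ i, ∑ j, p.2 i * A ξ i j * p.2 j := by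
    simp_rw [Finset.mul_sum]
    exact Finset.sum_congr rfl fun i _ => Finset.sum_congr rfl fun j _ => by ring
  simp only [kineticSymbol, Prod.smul_fst, Prod.smul_snd, PiLp.smul_apply, smul_eq_mul,
    htransport, hdiffusion, abs_mul, mul_pow, sq_abs]
  ring

lemma mul_kineticSymbol_le_kineticSymbol_smul {ρ r : ℝ} (hρ : 0 ≤ ρ) (hρr : ρ ≤ r)
    (p : ℝ × EuclideanSpace ℝ (Fin d)) (ξ : ℝ) :
    min (ρ ^ 2) (ρ ^ 4) * kineticSymbol a A p ξ ≤ kineticSymbol a A (r • p) ξ := by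
  have h₂ : min (ρ ^ 2) (ρ ^ 4) ≤ r ^ 2 :=
    (min_le_left _ _).trans (pow_le_pow_left₀ hρ hρr 2)
  have h₄ : min (ρ ^ 2) (ρ ^ 4) ≤ r ^ 4 :=
    (min_le_right _ _).trans (pow_le_pow_left₀ hρ hρr 4)
  rw [kineticSymbol_smul, kineticSymbol]
  nlinarith [sq_nonneg |p.1 + ∑ i, a ξ i * p.2 i|, sq_nonneg (∑ i, ∑ j, p.2 i * A ξ i j * p.2 j)]

lemma ae_pos_kineticSymbol {M : ℝ}
    (hnd : ∀ (τ : ℝ) (κ : EuclideanSpace ℝ (Fin d)), τ ^ 2 + ‖κ‖ ^ 2 = 1 →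
      volume {ξ : ℝ | |ξ| ≤ M ∧ τ + ∑ i, a ξ i * κ i = 0 ∧
        ∑ i, ∑ j, κ i * A ξ i j * κ j = 0} = 0)
    {u : ℝ × EuclideanSpace ℝ (Fin d)} (hu : u ∈ unitSphereProd _) :
    ∀ᵐ ξ ∂volume.restrict (Icc (-M) M), 0 < kineticSymbol a A u ξ := by
  rw [ae_restrict_iff' measurableSet_Icc, ae_iff]
  refine measure_mono_null (fun ξ hξ => ?_) (hnd u.1 u.2 hu)
  obtain ⟨hξM, hξM', hle⟩ : -M ≤ ξ ∧ ξ ≤ M ∧ kineticSymbol a A u ξ ≤ 0 := by simpa using hξ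
  have hzero := le_antisymm hle (kineticSymbol_nonneg u ξ)
  rw [kineticSymbol, add_eq_zero_iff_of_nonneg (by positivity) (by positivity)] at hzero
  exact ⟨abs_le.2 ⟨hξM, hξM'⟩, by simpa using hzero.1, by simpa using hzero.2⟩

lemma exists_mem_unitSphereProd_integral_div_add_kineticSymbol_le (ha : Continuous a)
    (hA : Continuous A) {μ : Measure ℝ} [IsFiniteMeasure μ] {δ ℓ : ℝ} (hδ : 0 < δ) (hℓ : 0 < ℓ)
    {p : ℝ × EuclideanSpace ℝ (Fin d)} (hp : δ ≤ |p.1| + ‖p.2‖) :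
    ∃ u ∈ unitSphereProd _, ∫ ξ, ℓ / (ℓ + kineticSymbol a A p ξ) ∂μ ≤
      ∫ ξ, (min ((δ / 2) ^ 2) ((δ / 2) ^ 4))⁻¹ * ℓ /
        ((min ((δ / 2) ^ 2) ((δ / 2) ^ 4))⁻¹ * ℓ + kineticSymbol a A u ξ) ∂μ := by
  obtain ⟨r, hr, u, hu, rfl⟩ := exists_eq_smul_mem_unitSphereProd hδ hp
  exact ⟨u, hu, integral_div_add_le_of_mul_le
    (continuous_kineticSymbol_right ha hA _).aestronglyMeasurable
    (continuous_kineticSymbol_right ha hA _).aestronglyMeasurable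
    (kineticSymbol_nonneg _) (kineticSymbol_nonneg _) hℓ (by positivity)
    (mul_kineticSymbol_le_kineticSymbol_smul (by positivity) hr u)⟩

end KineticSymbol

theorem stmt4_general {d : ℕ} (a : ℝ → EuclideanSpace ℝ (Fin d))
    (A : ℝ → Matrix (Fin d) (Fin d) ℝ) (M : ℝ)
    (ha : Continuous a) (hA : Continuous A)
    (hnd : ∀ (τ : ℝ) (κ : EuclideanSpace ℝ (Fin d)), τ ^ 2 + ‖κ‖ ^ 2 = 1 →
      volume {ξ : ℝ | |ξ| ≤ M ∧ τ + ∑ i, a ξ i * κ i = 0 ∧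
        ∑ i, ∑ j, κ i * A ξ i j * κ j = 0} = 0)
    (ω : ℝ → ℝ → ℝ)
    (hω : ∀ δ ℓ, ω δ ℓ =
      ⨆ p : {p : ℝ × EuclideanSpace ℝ (Fin d) // δ ≤ |p.1| + ‖p.2‖},
        ∫ ξ in Set.Icc (-M) M,
          ℓ / (ℓ + |p.1.1 + ∑ i, a ξ i * p.1.2 i| ^ 2 +
            (∑ i, ∑ j, p.1.2 i * A ξ i j * p.1.2 j) ^ 2)) :
    ∀ δ > 0, Tendsto (fun ℓ => ω δ ℓ) (𝓝[>] (0 : ℝ)) (𝓝 0) := by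
  intro δ hδ
  have hunif := tendstoUniformlyOn_integral_div_add (μ := volume.restrict (Icc (-M) M))
    isCompact_unitSphereProd
    (fun u => (continuous_kineticSymbol_right ha hA u).aestronglyMeasurable)
    continuous_kineticSymbol_left kineticSymbol_nonneg fun u hu => ae_pos_kineticSymbol hnd hu
  rw [Metric.tendsto_nhds]
  intro ε hε
  have hc : 0 < (min ((δ / 2) ^ 2) ((δ / 2) ^ 4))⁻¹ := by positivity
  filter_upwards [self_mem_nhdsWithin, eventually_nhdsGT_zero_mul_left hc
    (Metric.tendstoUniformlyOn_iff.1 hunif (ε / 2) (half_pos hε))] with ℓ (hℓ : 0 < ℓ) hsmall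
  have hω' : ω δ ℓ = ⨆ p : {p : ℝ × EuclideanSpace ℝ (Fin d) // δ ≤ |p.1| + ‖p.2‖},
      ∫ ξ in Icc (-M) M, ℓ / (ℓ + kineticSymbol a A p.1 ξ) := by
    simp only [hω, kineticSymbol, add_assoc]
  have hbound : ω δ ℓ ≤ ε / 2 := by
    refine hω' ▸ Real.iSup_le (fun ⟨p, hp⟩ => ?_) (half_pos hε).le
    obtain ⟨u, hu, hle⟩ := exists_mem_unitSphereProd_integral_div_add_kineticSymbol_le
      (μ := volume.restrict (Icc (-M) M)) ha hA hδ hℓ hp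
    exact hle.trans ((Real.le_norm_self _).trans (by simpa using (hsmall u hu).le))
  have hnonneg : 0 ≤ ω δ ℓ :=
    hω' ▸ Real.iSup_nonneg fun p => integral_div_add_nonneg (kineticSymbol_nonneg _) hℓ.le
  rw [Real.dist_eq, sub_zero, abs_of_nonneg hnonneg]
  linarith

theorem stmt4 {d : ℕ} (a : ℝ → EuclideanSpace ℝ (Fin d))
    (A : ℝ → Matrix (Fin d) (Fin d) ℝ) (M : ℝ)
    (ha : Continuous a) (hA : Continuous A)
    (hsymm : ∀ ξ, (A ξ).IsSymm)
    (hnonneg : ∀ ξ (κ : EuclideanSpace ℝ (Fin d)), 0 ≤ ∑ i, ∑ j, κ i * A ξ i j * κ j)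
    (hM : 0 < M)
    (hnd : ∀ (τ : ℝ) (κ : EuclideanSpace ℝ (Fin d)), τ ^ 2 + ‖κ‖ ^ 2 = 1 →
      volume {ξ : ℝ | |ξ| ≤ M ∧ τ + ∑ i, a ξ i * κ i = 0 ∧
        ∑ i, ∑ j, κ i * A ξ i j * κ j = 0} = 0)
    (ω : ℝ → ℝ → ℝ)
    (hω : ∀ δ ℓ, ω δ ℓ =
      ⨆ p : {p : ℝ × EuclideanSpace ℝ (Fin d) // δ ≤ |p.1| + ‖p.2‖},
        ∫ ξ in Set.Icc (-M) M,
          ℓ / (ℓ + |p.1.1 + ∑ i, a ξ i * p.1.2 i| ^ 2 +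
            (∑ i, ∑ j, p.1.2 i * A ξ i j * p.1.2 j) ^ 2)) :
    ∀ δ > 0, Tendsto (fun ℓ => ω δ ℓ) (𝓝[>] (0 : ℝ)) (𝓝 0) :=
  stmt4_general a A M ha hA hnd ω hω
end
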